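/- arXiv:1805.03552 — 2 statements merged into one kernel-verified Lean document; each statement's English description precedes it below -/
import Mathlib

section
/- Let G ↷ X and G ↷ Y be p.m.p. actions of a countable group G, let q : X → Y be a G-equivariant measure-preserving map (an extension), and suppose the relatively independent self-joining X ⊗_Y X → Y is relatively ergodic (q is relatively weakly mixing). Let L be a Polish group with a bi-invariant metric, let u, v : G × Y → L be measurable maps, and suppose Φ : X → L is measurable with u(g, q(x)) = Φ(gx) v(g, q(x)) Φ(x)^{-1} for all g ∈ G and a.e. x ∈ X. Then Φ descends to Y: there is a measurable f : Y → L with Φ(x) = f(q(x)) for a.e. x. -/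
/-!
On `X ⊗_Y X` the function `(x, x') ↦ dist (Φ x) (Φ x')` is `G`-invariant: two points of a common
fibre are multiplied by the same `u` on the left and `v⁻¹` on the right, which a bi-invariant metric
does not see. By relative weak mixing every sublevel set `{dist < ε}` is lifted from `Y`, so it is
null or conull for `κ y ⊗ κ y` for a.e. `y`. Separability of `L` excludes the null case, hence `Φ`
is `κ y`-a.e. constant for a.e. `y`; the constant depends measurably on `y`, since it is recovered
from the fibrewise integral of a bounded Borel embedding of `L` into `ℝ`.
-/

open MeasureTheory ProbabilityTheory Filter Set

section FibreConstancy

variable {X L : Type*} [MeasurableSpace X]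

theorem exists_ae_eq_const_of_ae_prod_eq (m : Measure X) [SFinite m] [NeZero m] {Φ : X → L}
    (h : ∀ᵐ p ∂m.prod m, Φ p.1 = Φ p.2) : ∃ c, ∀ᵐ x ∂m, Φ x = c := by
  have : (ae m).NeBot := ae_neBot.2 (NeZero.ne m)
  obtain ⟨x₀, hx₀⟩ := (Measure.ae_ae_of_ae_prod h).exists
  exact ⟨Φ x₀, hx₀.mono fun _ hx ↦ hx.symm⟩

theorem measure_prod_dist_lt_ne_zero [PseudoMetricSpace L] [TopologicalSpace.SeparableSpace L]
    (m : Measure X) [SFinite m] [NeZero m] (Φ : X → L) {r : ℝ} (hr : 0 < r) :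
    m.prod m {p | dist (Φ p.1) (Φ p.2) < r} ≠ 0 := by
  obtain ⟨x⟩ := m.nonempty_of_neZero
  have : Nonempty L := ⟨Φ x⟩
  set d := TopologicalSpace.denseSeq L
  set cell : ℕ → Set X := fun n ↦ Φ ⁻¹' Metric.ball (d n) (r / 2)
  have hcover : (⋃ n, cell n) = univ := eq_univ_of_forall fun x ↦ mem_iUnion.2 <|
    (TopologicalSpace.denseRange_denseSeq L).exists_dist_lt (Φ x) (half_pos hr)
  obtain ⟨n, hn⟩ : ∃ n, m (cell n) ≠ 0 := by
    by_contra! h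
    exact NeZero.ne m (Measure.measure_univ_eq_zero.1 (hcover ▸ measure_iUnion_null h))
  have hsub : cell n ×ˢ cell n ⊆ {p | dist (Φ p.1) (Φ p.2) < r} := fun p ⟨h₁, h₂⟩ ↦
    calc dist (Φ p.1) (Φ p.2) ≤ dist (Φ p.1) (d n) + dist (Φ p.2) (d n) := dist_triangle_right ..
      _ < r / 2 + r / 2 := add_lt_add h₁ h₂
      _ = r := add_halves r
  intro h0
  have : m (cell n) * m (cell n) = 0 := Measure.prod_prod (μ := m) (ν := m) _ _ ▸
    measure_mono_null hsub h0
  exact hn (mul_self_eq_zero.1 this)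

theorem exists_ae_eq_const_of_ae_or_ae_not_dist_lt [MetricSpace L]
    [TopologicalSpace.SeparableSpace L] (m : Measure X) [SFinite m] [NeZero m] (Φ : X → L)
    (h : ∀ n : ℕ, (∀ᵐ p ∂m.prod m, dist (Φ p.1) (Φ p.2) < (n + 1 : ℝ)⁻¹) ∨
      ∀ᵐ p ∂m.prod m, ¬dist (Φ p.1) (Φ p.2) < (n + 1 : ℝ)⁻¹) :
    ∃ c, ∀ᵐ x ∂m, Φ x = c := by
  have hsmall : ∀ n : ℕ, ∀ᵐ p ∂m.prod m, dist (Φ p.1) (Φ p.2) < (n + 1 : ℝ)⁻¹ := fun n ↦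
    (h n).resolve_right fun hn ↦ measure_prod_dist_lt_ne_zero m Φ Nat.inv_pos_of_nat <| by
      simpa only [ae_iff, not_not] using hn
  refine exists_ae_eq_const_of_ae_prod_eq m ?_
  filter_upwards [ae_all_iff.2 hsmall] with p hp
  by_contra hne
  obtain ⟨n, hn⟩ := exists_nat_one_div_lt (dist_pos.2 hne)
  exact (hp n).not_ge (by simpa only [one_div] using hn.le)

end FibreConstancy

theorem ae_mem_or_ae_notMem_of_ae_eq_preimage {α β : Type*} [MeasurableSpace α] {m : Measure α}
    {f : α → β} {b : β} (hf : ∀ᵐ a ∂m, f a = b) {A : Set α} {B : Set β}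
    (hA : A =ᵐ[m] f ⁻¹' B) : (∀ᵐ a ∂m, a ∈ A) ∨ ∀ᵐ a ∂m, a ∉ A := by
  by_cases hb : b ∈ B
  · left
    filter_upwards [hf, hA.mem_iff] with a ha haA
    exact haA.2 (by rwa [mem_preimage, ha])
  · right
    filter_upwards [hf, hA.mem_iff] with a ha haA
    exact fun h ↦ hb (ha ▸ (haA.1 h : f a ∈ B))

section RelativeProduct

variable {X Y : Type*} [MeasurableSpace X] [MeasurableSpace Y] {ν : Measure Y}
  {κ : Kernel Y X} [IsMarkovKernel κ]

theorem bind_prod_eq_comp_prod (ν : Measure Y) (κ : Kernel Y X) [IsSFiniteKernel κ] :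
    ν.bind (fun y ↦ (κ y).prod (κ y)) = (κ ×ₖ κ) ∘ₘ ν := by
  congr 1
  funext y
  exact (Kernel.prod_apply κ κ y).symm

theorem measurePreserving_fst_comp_prod :
    MeasurePreserving Prod.fst ((κ ×ₖ κ) ∘ₘ ν) (κ ∘ₘ ν) :=
  ⟨measurable_fst, by rw [Measure.map_comp _ _ measurable_fst, ← Kernel.fst_eq, Kernel.fst_prod]⟩

theorem measurePreserving_snd_comp_prod :
    MeasurePreserving Prod.snd ((κ ×ₖ κ) ∘ₘ ν) (κ ∘ₘ ν) :=
  ⟨measurable_snd, by rw [Measure.map_comp _ _ measurable_snd, ← Kernel.snd_eq, Kernel.snd_prod]⟩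

theorem ae_comp_prod_fst_eq_snd [MeasurableEq Y] {q : X → Y} (hq : Measurable q)
    (hfib : ∀ᵐ y ∂ν, ∀ᵐ x ∂κ y, q x = y) : ∀ᵐ p ∂(κ ×ₖ κ) ∘ₘ ν, q p.1 = q p.2 := by
  refine Measure.ae_comp_of_ae_ae (measurableSet_eq_fun (hq.comp measurable_fst)
    (hq.comp measurable_snd)) ?_
  filter_upwards [hfib] with y hy
  rw [Kernel.prod_apply]
  filter_upwards [measurePreserving_fst.quasiMeasurePreserving.ae hy,
    measurePreserving_snd.quasiMeasurePreserving.ae hy] with p h₁ h₂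
  rw [h₁, h₂]

theorem ae_dist_comp_eq_of_ae_eq_mul_mul {L : Type*} [Group L] [PseudoMetricSpace L]
    (h_left : ∀ a b c : L, dist (c * a) (c * b) = dist a b)
    (h_right : ∀ a b c : L, dist (a * c) (b * c) = dist a b) [MeasurableEq Y] {q : X → Y}
    (hq : Measurable q) (hfib : ∀ᵐ y ∂ν, ∀ᵐ x ∂κ y, q x = y) {S : X → X} {a b : Y → L}
    {Φ : X → L} (hS : ∀ᵐ x ∂κ ∘ₘ ν, Φ (S x) = a (q x) * Φ x * b (q x)) :
    ∀ᵐ p ∂(κ ×ₖ κ) ∘ₘ ν, dist (Φ (S p.1)) (Φ (S p.2)) = dist (Φ p.1) (Φ p.2) := by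
  filter_upwards [measurePreserving_fst_comp_prod.quasiMeasurePreserving.ae hS,
    measurePreserving_snd_comp_prod.quasiMeasurePreserving.ae hS,
    ae_comp_prod_fst_eq_snd hq hfib] with p h₁ h₂ hp
  rw [h₁, h₂, hp, h_right, h_left]

theorem ae_exists_ae_eq_const_of_ae_eq_preimage {L : Type*} [MetricSpace L]
    [TopologicalSpace.SeparableSpace L] {q : X → Y} (hfib : ∀ᵐ y ∂ν, ∀ᵐ x ∂κ y, q x = y)
    {Φ : X → L}
    (hB : ∀ n : ℕ, ∃ B : Set Y, {p : X × X | dist (Φ p.1) (Φ p.2) < (n + 1 : ℝ)⁻¹}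
      =ᵐ[(κ ×ₖ κ) ∘ₘ ν] (fun p ↦ q p.1) ⁻¹' B) :
    ∀ᵐ y ∂ν, ∃ c, ∀ᵐ x ∂κ y, Φ x = c := by
  choose B hB using hB
  have hfibre : ∀ n : ℕ, ∀ᵐ y ∂ν, {p : X × X | dist (Φ p.1) (Φ p.2) < (n + 1 : ℝ)⁻¹}
      =ᵐ[(κ y).prod (κ y)] (fun p ↦ q p.1) ⁻¹' B n := fun n ↦
    (Measure.ae_ae_of_ae_comp (hB n)).mono fun y hy ↦ by rwa [Kernel.prod_apply] at hy
  filter_upwards [hfib, ae_all_iff.2 hfibre] with y hy hyB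
  exact exists_ae_eq_const_of_ae_or_ae_not_dist_lt (κ y) Φ fun n ↦
    ae_mem_or_ae_notMem_of_ae_eq_preimage (measurePreserving_fst.quasiMeasurePreserving.ae hy)
      (hyB n)

end RelativeProduct

theorem ProbabilityTheory.Kernel.exists_measurable_eq_of_ae_eq_const {X Y L : Type*}
    [MeasurableSpace X] [MeasurableSpace Y] [MeasurableSpace L] [StandardBorelSpace L]
    [Nonempty L] (κ : Kernel Y X) [IsMarkovKernel κ] {Φ : X → L} (hΦ : Measurable Φ) :
    ∃ f : Y → L, Measurable f ∧ ∀ y c, (∀ᵐ x ∂κ y, Φ x = c) → f y = c := by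
  obtain ⟨e, he⟩ := exists_measurableEmbedding_real L
  -- `arctan` makes the embedding bounded, so that its fibrewise integrals are always defined
  have he' : MeasurableEmbedding fun l ↦ Real.arctan (e l) :=
    (Real.measurable_arctan.comp he.measurable).measurableEmbedding
      (Real.arctan_injective.comp he.injective)
  obtain ⟨g, hg, hge⟩ := he'.exists_measurable_extend measurable_id fun _ ↦ ‹Nonempty L›
  have hF : Measurable fun y ↦ ∫ x, Real.arctan (e (Φ x)) ∂κ y :=
    ((Real.measurable_arctan.comp (he.measurable.comp hΦ)).comp measurable_snd).stronglyMeasurable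
      |>.integral_kernel_prod_right' (κ := κ) |>.measurable
  refine ⟨fun y ↦ g (∫ x, Real.arctan (e (Φ x)) ∂κ y), hg.comp hF, fun y c hc ↦ ?_⟩
  dsimp only
  rw [integral_congr_ae (hc.mono fun x hx ↦ by rw [hx]), MeasureTheory.integral_const,
    probReal_univ, one_smul]
  exact congrFun hge c

theorem descend_of_relatively_weakly_mixing_general
    {G : Type*}
    {X Y : Type*} [MeasurableSpace X]
    [MeasurableSpace Y] [StandardBorelSpace Y]
    (μ : Measure X)
    (ν : Measure Y)
    (S : G → X → X)
    (q : X → Y) (hq : MeasurePreserving q μ ν)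
    (κ : Kernel Y X) [IsMarkovKernel κ]
    (hκ_disint : μ = ν.bind (fun y => κ y))
    (hκ_fiber : ∀ᵐ y ∂ν, (κ y) ((q ⁻¹' {y})ᶜ) = 0)
    (relProd : Measure (X × X))
    (h_relProd : relProd = ν.bind (fun y => (κ y).prod (κ y)))
    (h_rwm : ∀ A : Set (X × X), MeasurableSet A →
      (∀ g : G, (fun p : X × X => (S g p.1, S g p.2)) ⁻¹' A =ᵐ[relProd] A) →
      ∃ B : Set Y, MeasurableSet B ∧ A =ᵐ[relProd] ((fun p : X × X => q p.1) ⁻¹' B))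
    {L : Type*} [Group L] [MetricSpace L] [CompleteSpace L]
    [TopologicalSpace.SeparableSpace L] [MeasurableSpace L] [BorelSpace L]
    (h_dist_left : ∀ a b c : L, dist (c * a) (c * b) = dist a b)
    (h_dist_right : ∀ a b c : L, dist (a * c) (b * c) = dist a b)
    (u v : G → Y → L)
    (Φ : X → L) (hΦ : Measurable Φ)
    (h_main : ∀ g : G, ∀ᵐ x ∂μ, u g (q x) = Φ (S g x) * v g (q x) * (Φ x)⁻¹) :
    ∃ f : Y → L, Measurable f ∧ ∀ᵐ x ∂μ, Φ x = f (q x) := by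
  have hfib : ∀ᵐ y ∂ν, ∀ᵐ x ∂κ y, q x = y := hκ_fiber
  rw [bind_prod_eq_comp_prod] at h_relProd
  subst hκ_disint h_relProd
  have hcocycle : ∀ g, ∀ᵐ x ∂κ ∘ₘ ν, Φ (S g x) = u g (q x) * Φ x * (v g (q x))⁻¹ := fun g ↦
    (h_main g).mono fun x hx ↦ by rw [hx]; group
  have hA : ∀ n : ℕ, ∃ B : Set Y, {p : X × X | dist (Φ p.1) (Φ p.2) < (n + 1 : ℝ)⁻¹}
      =ᵐ[(κ ×ₖ κ) ∘ₘ ν] (fun p ↦ q p.1) ⁻¹' B := fun n ↦ by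
    refine (h_rwm _ (measurableSet_lt ((hΦ.comp measurable_fst).dist (hΦ.comp measurable_snd))
      measurable_const) fun g ↦ eventuallyEq_set.2 ?_).imp fun _ ↦ And.right
    filter_upwards [ae_dist_comp_eq_of_ae_eq_mul_mul (a := u g) (b := fun y ↦ (v g y)⁻¹)
      h_dist_left h_dist_right hq.measurable hfib (hcocycle g)] with p hp
    exact iff_of_eq (congrArg (· < _) hp)
  obtain ⟨f, hf, hfc⟩ := κ.exists_measurable_eq_of_ae_eq_const hΦ
  refine ⟨f, hf, Measure.ae_comp_of_ae_ae (measurableSet_eq_fun hΦ (hf.comp hq.measurable)) ?_⟩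
  filter_upwards [hfib, ae_exists_ae_eq_const_of_ae_eq_preimage hfib hA] with y hy ⟨c, hc⟩
  filter_upwards [hy, hc] with x hxy hxc
  rw [hxc, hxy, hfc y c hc]

/-- Let `q : X → Y` be an extension of p.m.p. actions of a countable group `G`, with
`κ` a disintegration of `μ` over `q`, and suppose `q` is relatively weakly mixing:
every `G`-invariant measurable subset of the relatively independent self-joining
`X ⊗_Y X` (with measure `∫ κ_y ⊗ κ_y dν(y)`) agrees a.e. with a set lifted from `Y`.
Let `L` be a Polish group with a bi-invariant metric, `u v : G × Y → L` measurable,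
and `Φ : X → L` measurable with `u(g, q x) = Φ(g x) v(g, q x) Φ(x)⁻¹` for all `g` and
a.e. `x`.  Then `Φ` descends to `Y`: `Φ = f ∘ q` a.e. for some measurable `f`. -/
theorem descend_of_relatively_weakly_mixing
    {G : Type*} [Group G] [Countable G]
    {X Y : Type*} [MeasurableSpace X] [StandardBorelSpace X]
    [MeasurableSpace Y] [StandardBorelSpace Y]
    (μ : Measure X) [IsProbabilityMeasure μ]
    (ν : Measure Y) [IsProbabilityMeasure ν]
    (S : G → X → X) (T : G → Y → Y)
    (hS_one : ∀ x, S 1 x = x) (hS_mul : ∀ g h x, S (g * h) x = S g (S h x))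
    (hS_pmp : ∀ g, MeasurePreserving (S g) μ μ)
    (hT_one : ∀ y, T 1 y = y) (hT_mul : ∀ g h y, T (g * h) y = T g (T h y))
    (hT_pmp : ∀ g, MeasurePreserving (T g) ν ν)
    (q : X → Y) (hq : MeasurePreserving q μ ν)
    (hq_equiv : ∀ g : G, ∀ᵐ x ∂μ, q (S g x) = T g (q x))
    (κ : Kernel Y X) [IsMarkovKernel κ]
    (hκ_disint : μ = ν.bind (fun y => κ y))
    (hκ_fiber : ∀ᵐ y ∂ν, (κ y) ((q ⁻¹' {y})ᶜ) = 0)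
    (relProd : Measure (X × X))
    (h_relProd : relProd = ν.bind (fun y => (κ y).prod (κ y)))
    (h_rwm : ∀ A : Set (X × X), MeasurableSet A →
      (∀ g : G, (fun p : X × X => (S g p.1, S g p.2)) ⁻¹' A =ᵐ[relProd] A) →
      ∃ B : Set Y, MeasurableSet B ∧ A =ᵐ[relProd] ((fun p : X × X => q p.1) ⁻¹' B))
    {L : Type*} [Group L] [MetricSpace L] [CompleteSpace L]
    [TopologicalSpace.SeparableSpace L] [MeasurableSpace L] [BorelSpace L]
    (h_dist_left : ∀ a b c : L, dist (c * a) (c * b) = dist a b)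
    (h_dist_right : ∀ a b c : L, dist (a * c) (b * c) = dist a b)
    (u v : G → Y → L) (hu : ∀ g, Measurable (u g)) (hv : ∀ g, Measurable (v g))
    (Φ : X → L) (hΦ : Measurable Φ)
    (h_main : ∀ g : G, ∀ᵐ x ∂μ, u g (q x) = Φ (S g x) * v g (q x) * (Φ x)⁻¹) :
    ∃ f : Y → L, Measurable f ∧ ∀ᵐ x ∂μ, Φ x = f (q x) :=
  descend_of_relatively_weakly_mixing_general μ ν S q hq κ hκ_disint hκ_fiber relProd h_relProd
    h_rwm h_dist_left h_dist_right u v Φ hΦ h_main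
end

section
/- Let G ↷ Z and H ↷ Z be free ergodic p.m.p. actions of countable groups on the same standard probability space generating the same orbit equivalence relation, with rearrangement cocycles u : H × Z → G and v : G × Z → H determined by u(h,z)·z = h·z and v(g,z)·z = g·z. For each z ∈ Z define Φ_z : [0,1]^G → [0,1]^H by Φ_z(b)(h) = b(u(h, h^{-1}z)), and Φ : Z × Y × [0,1]^G → Z × Y × [0,1]^H by Φ(z,y,b) = (z, y, Φ_z(b)). Then Φ is a measure-space isomorphism satisfying Φ(g·(z,y,b)) = v(g,z)·Φ(z,y,b) for all g ∈ G and a.e. (z,y,b); in particular Φ maps G-orbits bijectively onto H-orbits. -/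
/-!
Freeness identifies every orbit with `G` and with `H` at once: for fixed `z`, `h ↦ u(h, h⁻¹z)`
is the bijection `H → G` characterised by `g⁻¹z = h⁻¹z`. So `Φ` merely reindexes the Bernoulli
coordinates by a bijection that depends measurably on `z`; such a reindexing preserves the
product measure in every fibre. Writing `φ_z(h) = u(h, h⁻¹z)`, equivariance is the identity
`φ_z(v(g,z)⁻¹h) = g⁻¹ φ_{gz}(h)`, which holds because the inverses of both sides send `z` to
`h⁻¹gz`.
-/

open MeasureTheory
open scoped ENNReal unitInterval

/-- `μ` is the product (Bernoulli) measure on `ι → K` with base measure `μK`. -/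
def IsProductMeasure {ι K : Type*} [MeasurableSpace K]
    (μK : Measure K) (μ : Measure (ι → K)) : Prop :=
  IsProbabilityMeasure μ ∧
    ∀ (Q : Finset ι) (S : ι → Set K), (∀ i ∈ Q, MeasurableSet (S i)) →
      μ {f | ∀ i ∈ Q, f i ∈ S i} = ∏ i ∈ Q, μK (S i)

/-- The Bernoulli shift action of `G` on `G → K`: `(g • x)(h) = x (g⁻¹ h)`. -/
def bshift {G K : Type*} [Group G] (g : G) (x : G → K) : G → K :=
  fun h => x (g⁻¹ * h)

namespace IsProductMeasure

variable {ι κ K : Type*} [MeasurableSpace K] {μK : Measure K} [IsProbabilityMeasure μK]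

theorem eq_infinitePi {μ : Measure (ι → K)} (h : IsProductMeasure μK μ) :
    μ = Measure.infinitePi fun _ => μK :=
  Measure.eq_infinitePi _ fun s t ht => h.2 s t fun i _ => ht i

theorem measurePreserving_comp_equiv {μι : Measure (ι → K)} {μκ : Measure (κ → K)}
    (hι : IsProductMeasure μK μι) (hκ : IsProductMeasure μK μκ) (e : κ ≃ ι) :
    MeasurePreserving (fun c : ι → K => c ∘ e) μι μκ := by
  have h_eq : ⇑(MeasurableEquiv.piCongrLeft (fun _ => K) e.symm) = fun c => c ∘ e := by
    ext c k
    simp [MeasurableEquiv.coe_piCongrLeft, Equiv.piCongrLeft_apply_eq_cast]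
  rw [hι.eq_infinitePi, hκ.eq_infinitePi, ← h_eq]
  exact ⟨by fun_prop, Measure.infinitePi_map_piCongrLeft (fun _ => μK) e.symm⟩

end IsProductMeasure

open Function

theorem bijective_prodMk_fiberwise {α β γ : Type*} {F : α → β → γ} (hF : ∀ a, Bijective (F a)) :
    Bijective fun p : α × β => (p.1, F p.1 p.2) :=
  (Equiv.prodCongrRight fun a => Equiv.ofBijective (F a) (hF a)).bijective

theorem measurable_apply_of_measurableSet_fiber {α ι K : Type*} [MeasurableSpace α]
    [MeasurableSpace K] [Countable ι] {f : α → ι} (hf : ∀ i, MeasurableSet {x | f x = i})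
    {c : α → ι → K} (hc : Measurable c) : Measurable fun x => c x (f x) := by
  intro t ht
  have h_union : (fun x => c x (f x)) ⁻¹' t = ⋃ i, {x | f x = i} ∩ (fun x => c x i) ⁻¹' t := by
    ext x
    simp
  rw [h_union]
  exact .iUnion fun i => (hf i).inter (hc.eval ht)

section Reindex

variable {Z Y K ι κ : Type*} {φ : Z → κ → ι}

theorem bijective_reindex (hφ : ∀ z, Bijective (φ z)) :
    Bijective fun p : Z × Y × (ι → K) => (p.1, p.2.1, p.2.2 ∘ φ p.1) :=
  bijective_prodMk_fiberwise fun z => bijective_id.prodMap (hφ z).comp_right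

theorem measurePreserving_reindex [MeasurableSpace Z] [MeasurableSpace Y] [MeasurableSpace K]
    [Countable ι] (hφ : ∀ z, Bijective (φ z))
    (hφ_meas : ∀ k i, MeasurableSet {z | φ z k = i})
    {μZ : Measure Z} [SFinite μZ] {μY : Measure Y} [SFinite μY]
    {μK : Measure K} [IsProbabilityMeasure μK] {μι : Measure (ι → K)} {μκ : Measure (κ → K)}
    (hι : IsProductMeasure μK μι) (hκ : IsProductMeasure μK μκ) :
    MeasurePreserving (fun p : Z × Y × (ι → K) => (p.1, p.2.1, p.2.2 ∘ φ p.1))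
      (μZ.prod (μY.prod μι)) (μZ.prod (μY.prod μκ)) := by
  have := hι.1
  have h_meas : Measurable fun p : Z × Y × (ι → K) => (p.2.1, p.2.2 ∘ φ p.1) :=
    measurable_snd.fst.prodMk <| measurable_pi_lambda _ fun k =>
      measurable_apply_of_measurableSet_fiber (fun i => (hφ_meas k i).preimage measurable_fst)
        measurable_snd.snd
  refine (MeasurePreserving.id μZ).skew_product (g := fun z (w : Y × (ι → K)) => (w.1, w.2 ∘ φ z))
    h_meas (.of_forall fun z => ?_)
  exact ((MeasurePreserving.id μY).prod
    (hι.measurePreserving_comp_equiv hκ (Equiv.ofBijective _ (hφ z)))).map_eq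

end Reindex

section Rearrangement

variable {G H Z : Type*} [Group G] [Group H] [MulAction G Z] [MulAction H Z]
  {u : H → Z → G} {v : G → Z → H}

theorem smul_left_injective_of_free (hfree : ∀ (g : G) (z : Z), g • z = z → g = 1) (z : Z) :
    Injective fun g : G => g • z := by
  intro g g' h_eq
  have : (g'⁻¹ * g) • z = z := by
    rw [mul_smul]
    exact inv_smul_eq_iff.2 (h_eq : g • z = g' • z)
  exact (inv_mul_eq_one.1 (hfree _ _ this)).symm

theorem cocycle_eq_iff (hfree : ∀ (g : G) (z : Z), g • z = z → g = 1)
    (hu : ∀ h z, u h z • z = h • z) {h : H} {z : Z} {g : G} : u h z = g ↔ g • z = h • z :=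
  ⟨fun hg => hg ▸ hu h z, fun hg => smul_left_injective_of_free hfree z ((hu h z).trans hg.symm)⟩

/-- `Φ_z(b) = b ∘ rearrangement u z`. -/
def rearrangement (u : H → Z → G) (z : Z) (h : H) : G :=
  u h (h⁻¹ • z)

theorem rearrangement_eq_iff (hfree : ∀ (g : G) (z : Z), g • z = z → g = 1)
    (hu : ∀ h z, u h z • z = h • z) {z : Z} {h : H} {g : G} :
    rearrangement u z h = g ↔ g⁻¹ • z = h⁻¹ • z := by
  rw [rearrangement, cocycle_eq_iff hfree hu, smul_inv_smul, smul_eq_iff_eq_inv_smul, eq_comm]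

theorem bijective_rearrangement (hG_free : ∀ (g : G) (z : Z), g • z = z → g = 1)
    (hH_free : ∀ (h : H) (z : Z), h • z = z → h = 1)
    (hu : ∀ h z, u h z • z = h • z) (hv : ∀ g z, v g z • z = g • z) (z : Z) :
    Bijective (rearrangement u z) := by
  refine ⟨fun h h' h_eq => ?_, fun g => ⟨(v g⁻¹ z)⁻¹, ?_⟩⟩
  · have hh := (rearrangement_eq_iff hG_free hu).1 (rfl : rearrangement u z h = _)
    have hh' := (rearrangement_eq_iff hG_free hu).1 h_eq.symm
    exact inv_injective (smul_left_injective_of_free hH_free z (hh.symm.trans hh'))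
  · rw [rearrangement_eq_iff hG_free hu, inv_inv, hv]

theorem rearrangement_inv_cocycle_mul (hfree : ∀ (g : G) (z : Z), g • z = z → g = 1)
    (hu : ∀ h z, u h z • z = h • z) (hv : ∀ g z, v g z • z = g • z) (g : G) (z : Z) (h : H) :
    rearrangement u z ((v g z)⁻¹ * h) = g⁻¹ * rearrangement u (g • z) h := by
  have hh := (rearrangement_eq_iff hfree hu).1 (rfl : rearrangement u (g • z) h = _)
  rw [rearrangement_eq_iff hfree hu, mul_inv_rev, mul_inv_rev, inv_inv, inv_inv, mul_smul,
    mul_smul, hv, hh]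

theorem measurableSet_rearrangement_eq [MeasurableSpace Z] [MeasurableEq Z]
    [MeasurableConstSMul G Z] [MeasurableConstSMul H Z]
    (hfree : ∀ (g : G) (z : Z), g • z = z → g = 1) (hu : ∀ h z, u h z • z = h • z)
    (h : H) (g : G) : MeasurableSet {z | rearrangement u z h = g} := by
  simp_rw [rearrangement_eq_iff hfree hu]
  exact measurableSet_eq_fun (measurable_const_smul _) (measurable_const_smul _)

end Rearrangement

theorem rearrangement_orbit_equivalence_general
    {G H Z Y : Type*} [Group G] [Countable G] [Group H]
    [MeasurableSpace Z] [StandardBorelSpace Z]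
    [MeasurableSpace Y]
    (μZ : Measure Z) [IsProbabilityMeasure μZ]
    (μY : Measure Y) [IsProbabilityMeasure μY]
    (a : G → Z → Z) (b : H → Z → Z)
    (ha_one : ∀ z, a 1 z = z) (ha_mul : ∀ g g' z, a (g * g') z = a g (a g' z))
    (hb_one : ∀ z, b 1 z = z) (hb_mul : ∀ h h' z, b (h * h') z = b h (b h' z))
    (ha_pmp : ∀ g, MeasurePreserving (a g) μZ μZ)
    (hb_pmp : ∀ h, MeasurePreserving (b h) μZ μZ)
    (ha_free : ∀ g z, a g z = z → g = 1)
    (hb_free : ∀ h z, b h z = z → h = 1)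
    (u : H → Z → G) (hu : ∀ h z, a (u h z) z = b h z)
    (v : G → Z → H) (hv : ∀ g z, b (v g z) z = a g z)
    (aY : G → Y → Y)
    (μG : Measure (G → I)) (hμG : IsProductMeasure (volume : Measure I) μG)
    (μH : Measure (H → I)) (hμH : IsProductMeasure (volume : Measure I) μH) :
    Function.Bijective
      (fun p : Z × Y × (G → I) =>
        (p.1, p.2.1, fun h : H => p.2.2 (u h (b h⁻¹ p.1)))) ∧
    MeasurePreserving
      (fun p : Z × Y × (G → I) =>
        (p.1, p.2.1, fun h : H => p.2.2 (u h (b h⁻¹ p.1))))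
      (μZ.prod (μY.prod μG)) (μZ.prod (μY.prod μH)) ∧
    ∀ (g : G) (p : Z × Y × (G → I)),
      (fun p : Z × Y × (G → I) =>
          (p.1, p.2.1, fun h : H => p.2.2 (u h (b h⁻¹ p.1))))
        (a g p.1, aY g p.2.1, bshift g p.2.2)
      = (fun q : Z × Y × (H → I) =>
          (b (v g p.1) q.1, aY (u (v g p.1) q.1) q.2.1, bshift (v g p.1) q.2.2))
        ((fun p : Z × Y × (G → I) =>
          (p.1, p.2.1, fun h : H => p.2.2 (u h (b h⁻¹ p.1)))) p) := by
  let : MulAction G Z := { smul := a, one_smul := ha_one, mul_smul := ha_mul }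
  let : MulAction H Z := { smul := b, one_smul := hb_one, mul_smul := hb_mul }
  have : MeasurableConstSMul G Z := ⟨fun g => (ha_pmp g).measurable⟩
  have : MeasurableConstSMul H Z := ⟨fun h => (hb_pmp h).measurable⟩
  have h_bij := bijective_rearrangement ha_free hb_free hu hv
  refine ⟨bijective_reindex h_bij,
    measurePreserving_reindex h_bij (measurableSet_rearrangement_eq ha_free hu) hμG hμH, ?_⟩
  rintro g ⟨z, y, c⟩
  refine Prod.ext (hv g z).symm (Prod.ext ?_ (funext fun h => ?_))
  · exact congrArg (aY · y) ((cocycle_eq_iff ha_free hu).2 (hv g z).symm).symm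
  · exact congrArg c (rearrangement_inv_cocycle_mul ha_free hu hv g z h).symm

/-- Let `G ↷ Z` and `H ↷ Z` be free ergodic p.m.p. actions with the same orbits and
rearrangement cocycles `u, v`.  With `Φ_z(b)(h) = b (u (h, h⁻¹ z))` and
`Φ(z,y,b) = (z, y, Φ_z(b))`, the map `Φ : Z × Y × [0,1]^G → Z × Y × [0,1]^H` is a
measure-space isomorphism satisfying `Φ(g·(z,y,b)) = v(g,z)·Φ(z,y,b)`; in particular
it maps `G`-orbits bijectively onto `H`-orbits. -/
theorem rearrangement_orbit_equivalence
    {G H Z Y : Type*} [Group G] [Countable G] [Group H] [Countable H]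
    [MeasurableSpace Z] [StandardBorelSpace Z]
    [MeasurableSpace Y] [StandardBorelSpace Y]
    (μZ : Measure Z) [IsProbabilityMeasure μZ]
    (μY : Measure Y) [IsProbabilityMeasure μY]
    (a : G → Z → Z) (b : H → Z → Z)
    (ha_one : ∀ z, a 1 z = z) (ha_mul : ∀ g g' z, a (g * g') z = a g (a g' z))
    (hb_one : ∀ z, b 1 z = z) (hb_mul : ∀ h h' z, b (h * h') z = b h (b h' z))
    (ha_pmp : ∀ g, MeasurePreserving (a g) μZ μZ)
    (hb_pmp : ∀ h, MeasurePreserving (b h) μZ μZ)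
    (ha_erg : ∀ A : Set Z, MeasurableSet A → (∀ g : G, a g ⁻¹' A =ᵐ[μZ] A) →
      μZ A = 0 ∨ μZ A = 1)
    (hb_erg : ∀ A : Set Z, MeasurableSet A → (∀ h : H, b h ⁻¹' A =ᵐ[μZ] A) →
      μZ A = 0 ∨ μZ A = 1)
    (ha_free : ∀ g z, a g z = z → g = 1)
    (hb_free : ∀ h z, b h z = z → h = 1)
    (h_orbits : ∀ z g, ∃ h : H, b h z = a g z)
    (h_orbits' : ∀ z h, ∃ g : G, a g z = b h z)
    (u : H → Z → G) (hu : ∀ h z, a (u h z) z = b h z)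
    (v : G → Z → H) (hv : ∀ g z, b (v g z) z = a g z)
    (aY : G → Y → Y)
    (haY_one : ∀ y, aY 1 y = y) (haY_mul : ∀ g g' y, aY (g * g') y = aY g (aY g' y))
    (haY_pmp : ∀ g, MeasurePreserving (aY g) μY μY)
    (μG : Measure (G → I)) (hμG : IsProductMeasure (volume : Measure I) μG)
    (μH : Measure (H → I)) (hμH : IsProductMeasure (volume : Measure I) μH) :
    Function.Bijective
      (fun p : Z × Y × (G → I) =>
        (p.1, p.2.1, fun h : H => p.2.2 (u h (b h⁻¹ p.1)))) ∧
    MeasurePreserving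
      (fun p : Z × Y × (G → I) =>
        (p.1, p.2.1, fun h : H => p.2.2 (u h (b h⁻¹ p.1))))
      (μZ.prod (μY.prod μG)) (μZ.prod (μY.prod μH)) ∧
    ∀ (g : G) (p : Z × Y × (G → I)),
      (fun p : Z × Y × (G → I) =>
          (p.1, p.2.1, fun h : H => p.2.2 (u h (b h⁻¹ p.1))))
        (a g p.1, aY g p.2.1, bshift g p.2.2)
      = (fun q : Z × Y × (H → I) =>
          (b (v g p.1) q.1, aY (u (v g p.1) q.1) q.2.1, bshift (v g p.1) q.2.2))
        ((fun p : Z × Y × (G → I) =>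
          (p.1, p.2.1, fun h : H => p.2.2 (u h (b h⁻¹ p.1)))) p) :=
  rearrangement_orbit_equivalence_general μZ μY a b ha_one ha_mul hb_one hb_mul ha_pmp hb_pmp
    ha_free hb_free u hu v hv aY μG hμG μH hμH
end
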